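/- The Hamiltonian H₀ and the polynomial G₀ of the Dorizzi–Grammaticos–Ramani system Poisson commute: {H₀, G₀} = 0 in ℂ[q₁,q₂,p₁,p₂]. -/
import Mathlib


open MvPolynomial

/-- Polynomial ring ℂ[q₁,q₂,p₁,p₂]: variable 0 = q₁, 1 = q₂, 2 = p₁, 3 = p₂. -/
noncomputable abbrev q₁ : MvPolynomial (Fin 4) ℂ := X 0
noncomputable abbrev q₂ : MvPolynomial (Fin 4) ℂ := X 1
noncomputable abbrev p₁ : MvPolynomial (Fin 4) ℂ := X 2
noncomputable abbrev p₂ : MvPolynomial (Fin 4) ℂ := X 3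

/-- Poisson bracket {F₁,F₂} = ∂F₁/∂p₁·∂F₂/∂q₁ − ∂F₁/∂q₁·∂F₂/∂p₁
    + ∂F₁/∂p₂·∂F₂/∂q₂ − ∂F₁/∂q₂·∂F₂/∂p₂. -/
noncomputable def poissonBracket (F₁ F₂ : MvPolynomial (Fin 4) ℂ) : MvPolynomial (Fin 4) ℂ :=
  pderiv 2 F₁ * pderiv 0 F₂ - pderiv 0 F₁ * pderiv 2 F₂
    + pderiv 3 F₁ * pderiv 1 F₂ - pderiv 1 F₁ * pderiv 3 F₂

/-- The DGR Hamiltonian H₀, where `s` denotes i√3, a square root of −3. -/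
noncomputable def H₀ (s : ℂ) : MvPolynomial (Fin 4) ℂ :=
  C (1/2 : ℂ) * (p₁ ^ 2 + p₂ ^ 2) + q₁ ^ 3 + C (1/2 : ℂ) * q₁ * q₂ ^ 2
    + C (s / 18) * q₂ ^ 3

/-- The DGR second integral G₀, where `s` denotes i√3, a square root of −3. -/
noncomputable def G₀ (s : ℂ) : MvPolynomial (Fin 4) ℂ :=
  p₁ * p₂ ^ 3 - C (s / 2) * p₂ ^ 4 + C (1/2 : ℂ) * q₂ ^ 3 * p₁ ^ 2
    - (C (3/2 : ℂ) * q₁ * q₂ ^ 2 - C (s / 2) * q₂ ^ 3) * (p₁ * p₂)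
    + (C (3 : ℂ) * q₁ ^ 2 * q₂ - C s * q₁ * q₂ ^ 2 + C (1/2 : ℂ) * q₂ ^ 3) * p₂ ^ 2
    + C (1/2 : ℂ) * q₁ ^ 3 * q₂ ^ 3 + C (s / 8) * q₁ ^ 2 * q₂ ^ 4
    + C (1/4 : ℂ) * q₁ * q₂ ^ 5 + C (5 * s / 72) * q₂ ^ 6

set_option maxHeartbeats 4000000

/-- the DGR Hamiltonian and its second integral Poisson commute. -/
theorem dgr_poisson_commute (s : ℂ) (hs : s ^ 2 = -3) :
    poissonBracket (H₀ s) (G₀ s) = 0 := by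
  have hC : (C s : MvPolynomial (Fin 4) ℂ) ^ 2 = C (-3 : ℂ) := by rw [← map_pow, hs]
  have h2 : (C (s/2) : MvPolynomial (Fin 4) ℂ) = C s * C (1/2 : ℂ) := by
    rw [← map_mul]; ring_nf
  have h18 : (C (s/18) : MvPolynomial (Fin 4) ℂ) = C s * C (1/18 : ℂ) := by
    rw [← map_mul]; ring_nf
  have h8 : (C (s/8) : MvPolynomial (Fin 4) ℂ) = C s * C (1/8 : ℂ) := by
    rw [← map_mul]; ring_nf
  have h72 : (C (5*s/72) : MvPolynomial (Fin 4) ℂ) = C s * C (5/72 : ℂ) := by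
    rw [← map_mul]; ring_nf
  have e00 : pderiv (0:Fin 4) (X 0 : MvPolynomial (Fin 4) ℂ) = 1 := pderiv_X_self 0
  have e11 : pderiv (1:Fin 4) (X 1 : MvPolynomial (Fin 4) ℂ) = 1 := pderiv_X_self 1
  have e22 : pderiv (2:Fin 4) (X 2 : MvPolynomial (Fin 4) ℂ) = 1 := pderiv_X_self 2
  have e33 : pderiv (3:Fin 4) (X 3 : MvPolynomial (Fin 4) ℂ) = 1 := pderiv_X_self 3
  have e01 : pderiv (0:Fin 4) (X 1 : MvPolynomial (Fin 4) ℂ) = 0 := pderiv_X_of_ne (by decide)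
  have e02 : pderiv (0:Fin 4) (X 2 : MvPolynomial (Fin 4) ℂ) = 0 := pderiv_X_of_ne (by decide)
  have e03 : pderiv (0:Fin 4) (X 3 : MvPolynomial (Fin 4) ℂ) = 0 := pderiv_X_of_ne (by decide)
  have e10 : pderiv (1:Fin 4) (X 0 : MvPolynomial (Fin 4) ℂ) = 0 := pderiv_X_of_ne (by decide)
  have e12 : pderiv (1:Fin 4) (X 2 : MvPolynomial (Fin 4) ℂ) = 0 := pderiv_X_of_ne (by decide)
  have e13 : pderiv (1:Fin 4) (X 3 : MvPolynomial (Fin 4) ℂ) = 0 := pderiv_X_of_ne (by decide)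
  have e20 : pderiv (2:Fin 4) (X 0 : MvPolynomial (Fin 4) ℂ) = 0 := pderiv_X_of_ne (by decide)
  have e21 : pderiv (2:Fin 4) (X 1 : MvPolynomial (Fin 4) ℂ) = 0 := pderiv_X_of_ne (by decide)
  have e23 : pderiv (2:Fin 4) (X 3 : MvPolynomial (Fin 4) ℂ) = 0 := pderiv_X_of_ne (by decide)
  have e30 : pderiv (3:Fin 4) (X 0 : MvPolynomial (Fin 4) ℂ) = 0 := pderiv_X_of_ne (by decide)
  have e31 : pderiv (3:Fin 4) (X 1 : MvPolynomial (Fin 4) ℂ) = 0 := pderiv_X_of_ne (by decide)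
  have e32 : pderiv (3:Fin 4) (X 2 : MvPolynomial (Fin 4) ℂ) = 0 := pderiv_X_of_ne (by decide)
  simp only [poissonBracket, H₀, G₀, h2, h18, h8, h72, map_add, map_sub, pderiv_mul,
    pderiv_pow, pderiv_C_mul, pderiv_C, e00, e11, e22, e33, e01, e02, e03, e10, e12, e13,
    e20, e21, e23, e30, e31, e32, mul_zero, zero_mul, mul_one, one_mul, add_zero, zero_add,
    sub_zero, zero_sub, neg_zero]
  apply MvPolynomial.funext
  intro x
  simp only [map_add, map_sub, map_mul, map_pow, map_neg, map_one, map_zero, eval_C, eval_X,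
    map_ofNat, map_natCast, Nat.cast_ofNat]
  linear_combination ((1/3 : ℂ) * (x 1)^2 * (x 3)^3
    - (1/12 : ℂ) * (x 1)^5 * (x 2) + (1/3 : ℂ) * (x 0) * (x 1)^4 * (x 3)) * hs
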